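/- J : (J : I) = I; J : (J : I²) = (x², xy, y², z₁, …, z_r); for every ℓ with 3 ≤ ℓ ≤ n one has J : (J : I^ℓ) = (x^ℓ, xy, y³, z₁, …, z_r); and J : (J : I^{n+1}) = J. -/

import Mathlib

/-!
Write `M(a, b) = (x^a, xy, y^b, z)`, so that `I = M(1, 1)`. A power series lies in `M(a, b)`
(`a, b ≥ 1`) iff its coefficients at `x^i` for `i < a` and at `y^j` for `j < b` vanish, and it lies
in `J` iff it lies in `M(n, 3)` and its coefficients at `x^n` and `y^3` agree. Reading off the
coefficients of `f x^a` and `f y^b` gives the duality `J : M(a, b) = M(n + 1 - a, 4 - b)` for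
`1 ≤ a ≤ n` and `1 ≤ b ≤ 3`, hence `J : (J : M(a, b)) = M(a, b)`. Since `J : P = J : (P + J)`,
it remains to note that `I^ℓ + J = M(ℓ, min ℓ 3)` for `1 ≤ ℓ ≤ n`, as every element of `I^ℓ` has
order at least `ℓ`, and that `I^(n+1) ⊆ M(n + 1, 4) ⊆ J`.
-/

open Finsupp

namespace MvPowerSeries

variable {σ R : Type*} [CommRing R]

theorem coeff_eq_zero_of_mem_span_monomial {A : Set (σ →₀ ℕ)} {f : MvPowerSeries σ R}
    (hf : f ∈ Ideal.span ((monomial · (1 : R)) '' A)) {m : σ →₀ ℕ} (hm : ∀ a ∈ A, ¬a ≤ m) :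
    coeff m f = 0 := by
  classical
  induction hf using Submodule.span_induction generalizing m with
  | mem g hg =>
    obtain ⟨a, ha, rfl⟩ := hg
    rw [coeff_monomial, if_neg]
    exact fun h => hm a ha h.ge
  | zero => simp
  | add g h _ _ hg hh => rw [map_add, hg hm, hh hm, add_zero]
  | smul c g _ hg =>
    rw [smul_eq_mul, coeff_mul]
    refine Finset.sum_eq_zero fun p hp => ?_
    have hp2 : p.2 ≤ m := Finset.HasAntidiagonal.antidiagonal.snd_le hp
    rw [hg fun a ha hle => hm a ha (hle.trans hp2), mul_zero]

theorem mem_span_monomial_of_coeff {A : Set (σ →₀ ℕ)} (hA : A.Finite) {f : MvPowerSeries σ R}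
    (hf : ∀ m, (∀ a ∈ A, ¬a ≤ m) → coeff m f = 0) :
    f ∈ Ideal.span ((monomial · (1 : R)) '' A) := by
  induction A, hA using Set.Finite.induction_on generalizing f with
  | empty =>
    obtain rfl : f = 0 := ext fun m => by simpa using hf m
    exact zero_mem _
  | @insert a A _ _ ih =>
    -- split off the multiple of `X^a` carrying the coefficients of `f` above `a`
    obtain ⟨g, hg⟩ : ∃ g : MvPowerSeries σ R, ∀ m, coeff m g = coeff (m + a) f :=
      ⟨fun m => coeff (m + a) f, fun _ => rfl⟩
    have hrest : f - monomial a 1 * g ∈ Ideal.span ((monomial · (1 : R)) '' A) := by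
      refine ih fun m hm => ?_
      rw [map_sub, coeff_monomial_mul]
      split_ifs with ham
      · rw [one_mul, hg, tsub_add_cancel_of_le ham, sub_self]
      · rw [sub_zero]
        exact hf m (Set.forall_mem_insert.mpr ⟨ham, hm⟩)
    rw [← sub_add_cancel f (monomial a 1 * g)]
    exact add_mem (Ideal.span_mono (Set.image_mono (Set.subset_insert a A)) hrest)
      (Ideal.mul_mem_right _ _ (Ideal.subset_span ⟨a, Set.mem_insert a A, rfl⟩))

theorem mem_span_monomial_iff {A : Set (σ →₀ ℕ)} (hA : A.Finite) {f : MvPowerSeries σ R} :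
    f ∈ Ideal.span ((monomial · (1 : R)) '' A) ↔ ∀ m, (∀ a ∈ A, ¬a ≤ m) → coeff m f = 0 :=
  ⟨fun hf _ => coeff_eq_zero_of_mem_span_monomial hf, mem_span_monomial_of_coeff hA⟩

theorem natCast_le_order_of_mem_pow {P : Ideal (MvPowerSeries σ R)}
    (hP : ∀ f ∈ P, constantCoeff f = 0) {ℓ : ℕ} {f : MvPowerSeries σ R} (hf : f ∈ P ^ ℓ) :
    (ℓ : ℕ∞) ≤ f.order := by
  induction ℓ generalizing f with
  | zero => simp
  | succ ℓ ih =>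
    rw [pow_succ'] at hf
    refine Submodule.mul_induction_on hf (fun a ha b hb => ?_)
      fun a b ha hb => (le_min ha hb).trans min_order_le_add
    calc ((ℓ + 1 : ℕ) : ℕ∞) = 1 + ℓ := by push_cast; ring
      _ ≤ a.order + b.order :=
        add_le_add (one_le_order_iff_constCoeff_eq_zero.mpr (hP a ha)) (ih hb)
      _ ≤ (a * b).order := le_order_mul

theorem coeff_mul_X_pow_of_lt {u : σ} {a : ℕ} {m : σ →₀ ℕ} (h : m u < a)
    (f : MvPowerSeries σ R) : coeff m (f * X u ^ a) = 0 := by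
  rw [X_pow_eq, coeff_mul_monomial, if_neg]
  rw [single_le_iff]
  omega

theorem coeff_single_add_mul_X_pow (u : σ) (i a : ℕ) (f : MvPowerSeries σ R) :
    coeff (single u (i + a)) (f * X u ^ a) = coeff (single u i) f := by
  rw [X_pow_eq, single_add, coeff_add_mul_monomial, mul_one]

theorem forall_coeff_single_mul_X_pow_eq_zero_iff {u : σ} {a N : ℕ} {f : MvPowerSeries σ R} :
    (∀ i < N, coeff (single u i) (f * X u ^ a) = 0) ↔
      ∀ i < N - a, coeff (single u i) f = 0 := by
  refine ⟨fun h i hi => ?_, fun h i hi => ?_⟩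
  · rw [← coeff_single_add_mul_X_pow]
    exact h _ (by omega)
  · rcases lt_or_ge i a with hia | hai
    · exact coeff_mul_X_pow_of_lt (by simpa using hia) f
    · obtain ⟨j, rfl⟩ := Nat.exists_eq_add_of_le' hai
      rw [coeff_single_add_mul_X_pow]
      exact h j (by omega)

theorem coeff_single_mul_of_forall_lt {u : σ} {N : ℕ} {g : MvPowerSeries σ R}
    (hg : ∀ i < N, coeff (single u i) g = 0) (c : MvPowerSeries σ R) :
    coeff (single u N) (c * g) = constantCoeff c * coeff (single u N) g := by
  classical
  rw [coeff_mul, antidiagonal_single, Finset.sum_map, Finset.sum_eq_single (0, N)]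
  · simp
  · rintro ⟨i, j⟩ hij hne
    rw [Finset.HasAntidiagonal.mem_antidiagonal] at hij
    have hj : j < N := by
      by_contra!
      exact hne (by ext <;> simp <;> omega)
    simp [hg j hj]
  · simp

end MvPowerSeries

theorem Submodule.colon_sup_self {R : Type*} [CommRing R] (J P : Ideal R) :
    J.colon ↑(P ⊔ J) = J.colon P := by
  refine le_antisymm (colon_mono le_rfl (SetLike.coe_subset_coe.mpr le_sup_left)) fun r hr => ?_
  refine mem_colon.mpr fun f hf => ?_
  obtain ⟨p, hp, j, hj, rfl⟩ := mem_sup.mp hf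
  rw [smul_add]
  exact add_mem (mem_colon.mp hr p hp) (J.smul_mem r hj)

open MvPowerSeries

namespace Cusp

variable {σ : Type*} (k : Type*) [CommRing k] (s t : σ)

/-- The ideal `(x^a, xy, y^b, z)`, where `x = X s`, `y = X t` and `z` runs over the other
variables. -/
noncomputable def monomialIdeal (a b : ℕ) : Ideal (MvPowerSeries σ k) :=
  Ideal.span ({X s ^ a, X s * X t, X t ^ b} ∪ X '' {u | u ≠ s ∧ u ≠ t})

/-- The ideal `J = (y^3 + x^n, xy, z)` of the cuspidal structure of type `C_{3,n}`. -/
noncomputable def ideal (n : ℕ) : Ideal (MvPowerSeries σ k) :=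
  Ideal.span ({X t ^ 3 + X s ^ n, X s * X t} ∪ X '' {u | u ≠ s ∧ u ≠ t})

def generatorExponents (a b : ℕ) : Set (σ →₀ ℕ) :=
  {single s a, single s 1 + single t 1, single t b} ∪ (single · 1) '' {u | u ≠ s ∧ u ≠ t}

variable {k s t}

theorem monomialIdeal_eq_span_monomial (a b : ℕ) :
    monomialIdeal k s t a b =
      Ideal.span ((monomial · (1 : k)) '' generatorExponents s t a b) := by
  have hX : (X : σ → MvPowerSeries σ k) = fun u => monomial (single u 1) 1 := funext X_def
  rw [monomialIdeal, X_pow_eq, X_pow_eq, hX, monomial_mul_monomial, one_mul]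
  simp only [generatorExponents, Set.image_union, Set.image_insert_eq, Set.image_singleton,
    Set.image_image]

theorem finite_generatorExponents [Finite σ] (a b : ℕ) :
    (generatorExponents s t a b).Finite :=
  (Set.toFinite _).union ((Set.toFinite _).image _)

theorem exists_eq_single_of_forall_not_le (hst : s ≠ t) {a b : ℕ} {m : σ →₀ ℕ}
    (h : ∀ g ∈ generatorExponents s t a b, ¬g ≤ m) :
    (∃ i < a, m = single s i) ∨ ∃ j < b, m = single t j := by
  have hz : ∀ u, u ≠ s → u ≠ t → m u = 0 := fun u hus hut => by
    have := h (single u 1) (Or.inr ⟨u, ⟨hus, hut⟩, rfl⟩)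
    rw [single_le_iff] at this
    omega
  have hsa : m s < a :=
    not_le.mp (single_le_iff.not.mp (h (single s a) (by simp [generatorExponents])))
  have htb : m t < b :=
    not_le.mp (single_le_iff.not.mp (h (single t b) (by simp [generatorExponents])))
  have hsingle (v : σ) (hv : ∀ u ≠ v, m u = 0) : m = single v (m v) :=
    support_subset_singleton.mp fun u hu =>
      Finset.mem_singleton.mpr (by_contra fun huv => mem_support_iff.mp hu (hv u huv))
  by_cases hmt : m t = 0
  · refine Or.inl ⟨m s, hsa, hsingle s fun u hus => ?_⟩
    by_cases hut : u = t
    · rwa [hut]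
    · exact hz u hus hut
  · have hms : m s = 0 := by
      by_contra hms
      refine h (single s 1 + single t 1) (by simp [generatorExponents]) fun u => ?_
      classical
      simp only [Finsupp.add_apply, single_apply]
      split_ifs with h1 h2 h2
      · exact absurd (h1.trans h2.symm) hst
      · subst h1; omega
      · subst h2; omega
      · omega
    refine Or.inr ⟨m t, htb, hsingle t fun u hut => ?_⟩
    by_cases hus : u = s
    · rwa [hus]
    · exact hz u hus hut

theorem forall_not_le_of_eq_single (hst : s ≠ t) {a b : ℕ} (ha : 1 ≤ a) (hb : 1 ≤ b) {m : σ →₀ ℕ}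
    (hm : (∃ i < a, m = single s i) ∨ ∃ j < b, m = single t j) :
    ∀ g ∈ generatorExponents s t a b, ¬g ≤ m := by
  rintro g ((rfl | rfl | rfl) | ⟨u, ⟨hus, hut⟩, rfl⟩) hle
  · have := hle s
    rcases hm with ⟨i, hi, rfl⟩ | ⟨j, hj, rfl⟩ <;> simp [hst] at this <;> omega
  · have hs := hle s
    have ht := hle t
    rcases hm with ⟨i, hi, rfl⟩ | ⟨j, hj, rfl⟩ <;> simp [hst, Ne.symm hst] at hs ht
  · have := hle t
    rcases hm with ⟨i, hi, rfl⟩ | ⟨j, hj, rfl⟩ <;> simp [Ne.symm hst] at this <;> omega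
  · have := hle u
    rcases hm with ⟨i, hi, rfl⟩ | ⟨j, hj, rfl⟩ <;> simp [hus, hut] at this

theorem mem_monomialIdeal_iff [Finite σ] (hst : s ≠ t) {a b : ℕ} (ha : 1 ≤ a) (hb : 1 ≤ b)
    {f : MvPowerSeries σ k} :
    f ∈ monomialIdeal k s t a b ↔
      (∀ i < a, coeff (single s i) f = 0) ∧ ∀ j < b, coeff (single t j) f = 0 := by
  rw [monomialIdeal_eq_span_monomial,
    mem_span_monomial_iff (finite_generatorExponents a b)]
  refine ⟨fun h => ⟨fun i hi => h _ ?_, fun j hj => h _ ?_⟩, ?_⟩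
  · exact forall_not_le_of_eq_single hst ha hb (Or.inl ⟨i, hi, rfl⟩)
  · exact forall_not_le_of_eq_single hst ha hb (Or.inr ⟨j, hj, rfl⟩)
  · rintro ⟨hfs, hft⟩ m hm
    obtain ⟨i, hi, rfl⟩ | ⟨j, hj, rfl⟩ := exists_eq_single_of_forall_not_le hst hm
    exacts [hfs i hi, hft j hj]

theorem X_pow_left_mem_monomialIdeal (a b : ℕ) : X s ^ a ∈ monomialIdeal k s t a b :=
  Ideal.subset_span (by simp)

theorem X_mul_X_mem_monomialIdeal (a b : ℕ) : X s * X t ∈ monomialIdeal k s t a b :=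
  Ideal.subset_span (by simp)

theorem X_pow_right_mem_monomialIdeal (a b : ℕ) : X t ^ b ∈ monomialIdeal k s t a b :=
  Ideal.subset_span (by simp)

theorem X_mem_monomialIdeal {u : σ} (hus : u ≠ s) (hut : u ≠ t) (a b : ℕ) :
    X u ∈ monomialIdeal k s t a b :=
  Ideal.subset_span (Or.inr ⟨u, ⟨hus, hut⟩, rfl⟩)

theorem X_left_mem_monomialIdeal (b : ℕ) : X s ∈ monomialIdeal k s t 1 b := by
  simpa using X_pow_left_mem_monomialIdeal (k := k) (s := s) (t := t) 1 b

theorem X_right_mem_monomialIdeal (a : ℕ) : X t ∈ monomialIdeal k s t a 1 := by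
  simpa using X_pow_right_mem_monomialIdeal (k := k) (s := s) (t := t) a 1

theorem X_pow_add_X_pow_mem_ideal (n : ℕ) : X t ^ 3 + X s ^ n ∈ ideal k s t n :=
  Ideal.subset_span (by simp)

theorem X_mul_X_mem_ideal (n : ℕ) : X s * X t ∈ ideal k s t n :=
  Ideal.subset_span (by simp)

theorem X_mem_ideal {u : σ} (hus : u ≠ s) (hut : u ≠ t) (n : ℕ) : X u ∈ ideal k s t n :=
  Ideal.subset_span (Or.inr ⟨u, ⟨hus, hut⟩, rfl⟩)

theorem X_pow_succ_mem_ideal (n : ℕ) : X s ^ (n + 1) ∈ ideal k s t n := by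
  have : (X s : MvPowerSeries σ k) ^ (n + 1) =
      X s * (X t ^ 3 + X s ^ n) - X t ^ 2 * (X s * X t) := by ring
  rw [this]
  exact sub_mem (Ideal.mul_mem_left _ _ (X_pow_add_X_pow_mem_ideal n))
    (Ideal.mul_mem_left _ _ (X_mul_X_mem_ideal n))

theorem X_pow_four_mem_ideal {n : ℕ} (hn : 1 ≤ n) : X t ^ 4 ∈ ideal k s t n := by
  obtain ⟨p, rfl⟩ := Nat.exists_eq_add_of_le' hn
  have : (X t : MvPowerSeries σ k) ^ 4 =
      X t * (X t ^ 3 + X s ^ (p + 1)) - X s ^ p * (X s * X t) := by ring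
  rw [this]
  exact sub_mem (Ideal.mul_mem_left _ _ (X_pow_add_X_pow_mem_ideal _))
    (Ideal.mul_mem_left _ _ (X_mul_X_mem_ideal _))

theorem monomialIdeal_anti {a a' b b' : ℕ} (ha : a ≤ a') (hb : b ≤ b') :
    monomialIdeal k s t a' b' ≤ monomialIdeal k s t a b := by
  refine Ideal.span_le.mpr ?_
  rintro g ((rfl | rfl | rfl) | ⟨u, ⟨hus, hut⟩, rfl⟩)
  · exact Ideal.mem_of_dvd _ (pow_dvd_pow _ ha) (X_pow_left_mem_monomialIdeal a b)
  · exact X_mul_X_mem_monomialIdeal a b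
  · exact Ideal.mem_of_dvd _ (pow_dvd_pow _ hb) (X_pow_right_mem_monomialIdeal a b)
  · exact X_mem_monomialIdeal hus hut a b

theorem ideal_le_monomialIdeal (n : ℕ) : ideal k s t n ≤ monomialIdeal k s t n 3 := by
  refine Ideal.span_le.mpr ?_
  rintro g ((rfl | rfl) | ⟨u, ⟨hus, hut⟩, rfl⟩)
  · exact add_mem (X_pow_right_mem_monomialIdeal n 3) (X_pow_left_mem_monomialIdeal n 3)
  · exact X_mul_X_mem_monomialIdeal n 3
  · exact X_mem_monomialIdeal hus hut n 3

theorem monomialIdeal_le_ideal {n : ℕ} (hn : 1 ≤ n) :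
    monomialIdeal k s t (n + 1) 4 ≤ ideal k s t n := by
  refine Ideal.span_le.mpr ?_
  rintro g ((rfl | rfl | rfl) | ⟨u, ⟨hus, hut⟩, rfl⟩)
  · exact X_pow_succ_mem_ideal n
  · exact X_mul_X_mem_ideal n
  · exact X_pow_four_mem_ideal hn
  · exact X_mem_ideal hus hut n

theorem coeff_single_left_X_pow_add_X_pow (hst : s ≠ t) (i n : ℕ) :
    coeff (single s i) (X t ^ 3 + X s ^ n : MvPowerSeries σ k) = if i = n then 1 else 0 := by
  classical
  simp only [map_add, coeff_X_pow, single_eq_single_iff, hst, false_and, false_or]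
  grind

theorem coeff_single_right_X_pow_add_X_pow (hst : s ≠ t) {n : ℕ} (hn : 1 ≤ n) (j : ℕ) :
    coeff (single t j) (X t ^ 3 + X s ^ n : MvPowerSeries σ k) = if j = 3 then 1 else 0 := by
  classical
  simp only [map_add, coeff_X_pow, single_eq_single_iff, Ne.symm hst, false_and, false_or]
  grind

theorem coeff_single_left_eq_right_of_mem_ideal [Finite σ] (hst : s ≠ t) {n : ℕ} (hn : 1 ≤ n)
    {f : MvPowerSeries σ k} (hf : f ∈ ideal k s t n) :
    coeff (single s n) f = coeff (single t 3) f := by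
  classical
  induction hf using Submodule.span_induction with
  | mem g hg =>
    rcases hg with ((rfl | rfl) | ⟨u, ⟨hus, hut⟩, rfl⟩)
    · rw [coeff_single_left_X_pow_add_X_pow hst, coeff_single_right_X_pow_add_X_pow hst hn,
        if_pos rfl, if_pos rfl]
    · have hs : (single s n) t < 1 := by simp [hst]
      have ht : (single t 3) s < 1 := by simp [Ne.symm hst]
      rw [← pow_one (X t), coeff_mul_X_pow_of_lt hs, mul_comm, ← pow_one (X s),
        coeff_mul_X_pow_of_lt ht]
    · rw [coeff_X, coeff_X, if_neg, if_neg] <;>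
        simp [single_eq_single_iff, Ne.symm hus, Ne.symm hut]
  | zero => simp
  | add g h _ _ hg hh => rw [map_add, map_add, hg, hh]
  | smul c g hg ih =>
    -- the coefficients of `g` below `x^n` and `y^3` vanish, so only `c₀ g` contributes
    obtain ⟨hgs, hgt⟩ :=
      (mem_monomialIdeal_iff hst hn (by norm_num)).mp (ideal_le_monomialIdeal n hg)
    rw [smul_eq_mul, coeff_single_mul_of_forall_lt hgs, coeff_single_mul_of_forall_lt hgt, ih]

theorem mem_ideal_iff [Finite σ] (hst : s ≠ t) {n : ℕ} (hn : 1 ≤ n) {f : MvPowerSeries σ k} :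
    f ∈ ideal k s t n ↔
      f ∈ monomialIdeal k s t n 3 ∧ coeff (single s n) f = coeff (single t 3) f := by
  refine ⟨fun hf => ⟨ideal_le_monomialIdeal n hf,
    coeff_single_left_eq_right_of_mem_ideal hst hn hf⟩, fun ⟨hf, hfst⟩ => ?_⟩
  obtain ⟨hfs, hft⟩ := (mem_monomialIdeal_iff hst hn (by norm_num)).mp hf
  set c := coeff (single t 3) f
  -- subtracting `c (y^3 + x^n)` also kills the coefficients of `x^n` and `y^3`
  have hrest : f - C c * (X t ^ 3 + X s ^ n) ∈ ideal k s t n := by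
    refine monomialIdeal_le_ideal hn ((mem_monomialIdeal_iff hst (by omega) (by omega)).mpr
      ⟨fun i hi => ?_, fun j hj => ?_⟩)
    · rw [map_sub, coeff_C_mul, coeff_single_left_X_pow_add_X_pow hst]
      split_ifs with hin
      · rw [hin, hfst, mul_one, sub_self]
      · rw [hfs i (by omega), mul_zero, sub_zero]
    · rw [map_sub, coeff_C_mul, coeff_single_right_X_pow_add_X_pow hst hn]
      split_ifs with hj3
      · rw [hj3, mul_one, sub_self]
      · rw [hft j (by omega), mul_zero, sub_zero]
  rw [← sub_add_cancel f (C c * (X t ^ 3 + X s ^ n))]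
  exact add_mem hrest (Ideal.mul_mem_left _ _ (X_pow_add_X_pow_mem_ideal n))

theorem mul_X_pow_left_mem_ideal_iff [Finite σ] (hst : s ≠ t) {n a : ℕ} (hn : 1 ≤ n)
    (ha : 1 ≤ a) {f : MvPowerSeries σ k} :
    f * X s ^ a ∈ ideal k s t n ↔ ∀ i < n + 1 - a, coeff (single s i) f = 0 := by
  have hy (j : ℕ) : coeff (single t j) (f * X s ^ a) = 0 :=
    coeff_mul_X_pow_of_lt (by simp [Ne.symm hst]; omega) f
  rw [mem_ideal_iff hst hn, mem_monomialIdeal_iff hst hn (by norm_num),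
    ← forall_coeff_single_mul_X_pow_eq_zero_iff]
  simp only [hy, implies_true, and_true]
  exact Nat.forall_lt_succ_right.symm

theorem mul_X_pow_right_mem_ideal_iff [Finite σ] (hst : s ≠ t) {n b : ℕ} (hn : 1 ≤ n)
    (hb : 1 ≤ b) {f : MvPowerSeries σ k} :
    f * X t ^ b ∈ ideal k s t n ↔ ∀ j < 4 - b, coeff (single t j) f = 0 := by
  have hx (i : ℕ) : coeff (single s i) (f * X t ^ b) = 0 :=
    coeff_mul_X_pow_of_lt (by simp [hst]; omega) f
  rw [mem_ideal_iff hst hn, mem_monomialIdeal_iff hst hn (by norm_num),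
    ← forall_coeff_single_mul_X_pow_eq_zero_iff]
  simp only [hx, implies_true, true_and]
  exact (and_congr_right' eq_comm).trans Nat.forall_lt_succ_right.symm

theorem mem_colon_monomialIdeal_iff (n a b : ℕ) {f : MvPowerSeries σ k} :
    f ∈ (ideal k s t n).colon (monomialIdeal k s t a b) ↔
      f * X s ^ a ∈ ideal k s t n ∧ f * X t ^ b ∈ ideal k s t n := by
  rw [monomialIdeal, Ideal.colon_span, Submodule.mem_colon]
  refine ⟨fun h => ⟨h _ (by simp), h _ (by simp)⟩, ?_⟩
  rintro ⟨hx, hy⟩ g ((rfl | rfl | rfl) | ⟨u, ⟨hus, hut⟩, rfl⟩)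
  · exact hx
  · exact Ideal.mul_mem_left _ f (X_mul_X_mem_ideal n)
  · exact hy
  · exact Ideal.mul_mem_left _ f (X_mem_ideal hus hut n)

theorem colon_monomialIdeal [Finite σ] (hst : s ≠ t) {n a b : ℕ} (ha : 1 ≤ a) (han : a ≤ n)
    (hb : 1 ≤ b) (hb3 : b ≤ 3) :
    (ideal k s t n).colon (monomialIdeal k s t a b) =
      monomialIdeal k s t (n + 1 - a) (4 - b) := by
  ext f
  rw [mem_colon_monomialIdeal_iff, mul_X_pow_left_mem_ideal_iff hst (by omega) ha,
    mul_X_pow_right_mem_ideal_iff hst (by omega) hb,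
    mem_monomialIdeal_iff hst (by omega) (by omega)]

theorem pow_monomialIdeal_one_le [Finite σ] (hst : s ≠ t) {ℓ : ℕ} (hℓ : 1 ≤ ℓ) :
    monomialIdeal k s t 1 1 ^ ℓ ≤ monomialIdeal k s t ℓ ℓ := by
  intro f hf
  have hord : (ℓ : ℕ∞) ≤ f.order := by
    refine natCast_le_order_of_mem_pow (fun g hg => ?_) hf
    simpa using ((mem_monomialIdeal_iff hst le_rfl le_rfl).mp hg).1 0 one_pos
  have hdeg (u : σ) (i : ℕ) (hi : i < ℓ) : coeff (single u i) f = 0 :=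
    coeff_of_lt_order ((by simpa using hi : ((single u i).degree : ℕ∞) < ℓ).trans_le hord)
  exact (mem_monomialIdeal_iff hst hℓ hℓ).mpr ⟨hdeg s, hdeg t⟩

theorem pow_sup_ideal [Finite σ] (hst : s ≠ t) {n ℓ : ℕ} (hℓ : 1 ≤ ℓ) (hℓn : ℓ ≤ n) :
    monomialIdeal k s t 1 1 ^ ℓ ⊔ ideal k s t n = monomialIdeal k s t ℓ (min ℓ 3) := by
  refine le_antisymm (sup_le ?_ ?_) (Ideal.span_le.mpr ?_)
  · exact (pow_monomialIdeal_one_le hst hℓ).trans (monomialIdeal_anti le_rfl (min_le_left _ _))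
  · exact (ideal_le_monomialIdeal n).trans (monomialIdeal_anti hℓn (min_le_right _ _))
  have hxℓ : X s ^ ℓ ∈ monomialIdeal k s t 1 1 ^ ℓ ⊔ ideal k s t n :=
    Ideal.mem_sup_left (Ideal.pow_mem_pow (X_left_mem_monomialIdeal 1) ℓ)
  rintro g ((rfl | rfl | rfl) | ⟨u, ⟨hus, hut⟩, rfl⟩)
  · exact hxℓ
  · exact Ideal.mem_sup_right (X_mul_X_mem_ideal n)
  · rcases le_total ℓ 3 with h | h
    · rw [min_eq_left h]
      exact Ideal.mem_sup_left (Ideal.pow_mem_pow (X_right_mem_monomialIdeal 1) ℓ)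
    · have hy3 : (X t : MvPowerSeries σ k) ^ 3 =
          (X t ^ 3 + X s ^ n) - X s ^ (n - ℓ) * X s ^ ℓ := by
        rw [← pow_add, Nat.sub_add_cancel hℓn, add_sub_cancel_right]
      rw [min_eq_right h, hy3]
      exact sub_mem (Ideal.mem_sup_right (X_pow_add_X_pow_mem_ideal n))
        (Ideal.mul_mem_left _ _ hxℓ)
  · exact Ideal.mem_sup_right (X_mem_ideal hus hut n)

theorem colon_colon_pow [Finite σ] (hst : s ≠ t) {n ℓ : ℕ} (hℓ : 1 ≤ ℓ) (hℓn : ℓ ≤ n) :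
    (ideal k s t n).colon ((ideal k s t n).colon (monomialIdeal k s t 1 1 ^ ℓ : Ideal _)) =
      monomialIdeal k s t ℓ (min ℓ 3) := by
  rw [← Submodule.colon_sup_self _ (monomialIdeal k s t 1 1 ^ ℓ), pow_sup_ideal hst hℓ hℓn,
    colon_monomialIdeal hst hℓ hℓn (by omega) (min_le_right _ _),
    colon_monomialIdeal hst (by omega) (by omega) (by omega) (by omega)]
  congr 1 <;> omega

theorem pow_succ_le_ideal [Finite σ] (hst : s ≠ t) {n : ℕ} (hn : 3 ≤ n) :
    monomialIdeal k s t 1 1 ^ (n + 1) ≤ ideal k s t n :=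
  (pow_monomialIdeal_one_le hst (by omega)).trans
    ((monomialIdeal_anti le_rfl (by omega)).trans (monomialIdeal_le_ideal (by omega)))

theorem colon_colon_pow_succ [Finite σ] (hst : s ≠ t) {n : ℕ} (hn : 3 ≤ n) :
    (ideal k s t n).colon
      ((ideal k s t n).colon (monomialIdeal k s t 1 1 ^ (n + 1) : Ideal _)) = ideal k s t n := by
  rw [(Submodule.colon_eq_top_iff_subset _).mpr (pow_succ_le_ideal hst hn), Submodule.top_coe,
    Submodule.colon_univ]

theorem span_X_eq_monomialIdeal :
    Ideal.span ({X s, X t} ∪ X '' {u | u ≠ s ∧ u ≠ t}) = monomialIdeal k s t 1 1 := by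
  refine le_antisymm (Ideal.span_le.mpr ?_) (Ideal.span_le.mpr ?_)
  · rintro g ((rfl | rfl) | ⟨u, ⟨hus, hut⟩, rfl⟩)
    · exact X_left_mem_monomialIdeal 1
    · exact X_right_mem_monomialIdeal 1
    · exact X_mem_monomialIdeal hus hut 1 1
  · rintro g ((rfl | rfl | rfl) | hg)
    · exact Ideal.subset_span (by simp)
    · exact Ideal.mul_mem_left _ _ (Ideal.subset_span (by simp))
    · exact Ideal.subset_span (by simp)
    · exact Ideal.subset_span (Or.inr hg)

end Cusp

theorem Fin.range_succ_succ (r : ℕ) :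
    Set.range (fun i : Fin r => i.succ.succ) = {u : Fin (r + 2) | u ≠ 0 ∧ u ≠ 1} := by
  ext u
  refine ⟨?_, fun ⟨h0, h1⟩ => ?_⟩
  · rintro ⟨i, rfl⟩
    exact ⟨Fin.succ_ne_zero _, fun h => Fin.succ_ne_zero i (Fin.succ_injective _ h)⟩
  · obtain ⟨v, rfl⟩ := Fin.exists_succ_eq.mpr h0
    obtain ⟨i, rfl⟩ := Fin.exists_succ_eq.mpr (show v ≠ 0 by rintro rfl; exact h1 rfl)
    exact ⟨i, rfl⟩

/-- Double-colon filtration of the local model of a `C_{3,n}` cuspidal structure: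
`J : (J : I) = I`, `J : (J : I²) = (x², xy, y², z)`,
`J : (J : I^ℓ) = (x^ℓ, xy, y³, z)` for `3 ≤ ℓ ≤ n`, and `J : (J : I^{n+1}) = J`. -/
theorem stmt_14 (k : Type) [Field k] (n r : ℕ) (hn : 4 ≤ n)
    (x y : MvPowerSeries (Fin (r + 2)) k) (z : Fin r → MvPowerSeries (Fin (r + 2)) k)
    (hx : x = MvPowerSeries.X 0) (hy : y = MvPowerSeries.X 1)
    (hz : ∀ i : Fin r, z i = MvPowerSeries.X i.succ.succ)
    (I J : Ideal (MvPowerSeries (Fin (r + 2)) k))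
    (hI : I = Ideal.span ({x, y} ∪ Set.range z))
    (hJ : J = Ideal.span ({y ^ 3 + x ^ n, x * y} ∪ Set.range z)) :
    Submodule.colon J (Submodule.colon J ((I ^ 1 : Ideal _))) = I ∧
    Submodule.colon J (Submodule.colon J ((I ^ 2 : Ideal _))) =
      Ideal.span ({x ^ 2, x * y, y ^ 2} ∪ Set.range z) ∧
    (∀ ℓ : ℕ, 3 ≤ ℓ → ℓ ≤ n →
      Submodule.colon J (Submodule.colon J ((I ^ ℓ : Ideal _))) =
        Ideal.span ({x ^ ℓ, x * y, y ^ 3} ∪ Set.range z)) ∧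
    Submodule.colon J (Submodule.colon J ((I ^ (n + 1) : Ideal _))) = J := by
  have hst : (0 : Fin (r + 2)) ≠ 1 := by simp
  have hz' : Set.range z = MvPowerSeries.X '' {u | u ≠ 0 ∧ u ≠ 1} := by
    rw [show z = _ from funext hz, ← Fin.range_succ_succ, ← Set.range_comp]
    rfl
  subst hx hy
  rw [hz', Cusp.span_X_eq_monomialIdeal] at hI
  rw [hz'] at hJ ⊢
  change J = Cusp.ideal k 0 1 n at hJ
  subst hI hJ
  refine ⟨?_, ?_, fun ℓ hℓ hℓn => ?_, Cusp.colon_colon_pow_succ hst (by omega)⟩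
  · exact Cusp.colon_colon_pow hst le_rfl (by omega)
  · exact Cusp.colon_colon_pow hst (by omega) (by omega)
  · rw [Cusp.colon_colon_pow hst (by omega) hℓn, min_eq_right hℓ]
    rfl
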